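/- arXiv:2002.11096 — 4 statements merged into one kernel-verified Lean document; each statement's English description precedes it below -/
import Mathlib

section
/- Without using observational data: let (Y_i, T_i, Z_i), i = 1,...,m, be i.i.d. samples from the joint distribution of three binary variables (Y, T, Z) with parameters p_1,...,p_8, and let each empirical frequency p̂_j be the fraction of the m samples equal to the j-th outcome, and let ATE-hat := ATE(p̂_1,...,p̂_8) be the plug-in estimator. Suppose 0 < ε ≤ 1, 0 < δ < 1, and p_3+p_7 > 0, p_4+p_8 > 0, p_1+p_5 > 0, p_2+p_6 > 0. If m ≥ (18 ln(16/δ)/ε²) · max( 1/(p_3+p_7)², 1/(p_4+p_8)², 1/(p_1+p_5)², 1/(p_2+p_6)² ), then P(|ATE-hat − ATE(p_1,...,p_8)| ≥ ε) < δ. -/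
open MeasureTheory ProbabilityTheory

/-- The average treatment effect as a function of the joint distribution
`p : Fin 8 → ℝ`, where `p 0 = P(Y=0,T=0,Z=0)`, `p 1 = P(Y=0,T=0,Z=1)`,
`p 2 = P(Y=0,T=1,Z=0)`, `p 3 = P(Y=0,T=1,Z=1)`, `p 4 = P(Y=1,T=0,Z=0)`,
`p 5 = P(Y=1,T=0,Z=1)`, `p 6 = P(Y=1,T=1,Z=0)`, `p 7 = P(Y=1,T=1,Z=1)`
(i.e. `p i` here is `p_{i+1}` in the paper). -/
noncomputable def ATE (p : Fin 8 → ℝ) : ℝ :=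
  p 6 * (p 0 + p 2 + p 4 + p 6) / (p 6 + p 2)
    + p 7 * (1 - p 0 - p 2 - p 4 - p 6) / (p 7 + p 3)
    - p 4 * (p 0 + p 2 + p 4 + p 6) / (p 4 + p 0)
    - p 5 * (1 - p 0 - p 2 - p 4 - p 6) / (p 5 + p 1)


/-!
Write `ATE p = A (r₆₂ - r₄₀) + (1 - A) (r₇₃ - r₅₁)` with `A = P(Z = 0)` and
`r_ab = p a / (p a + p b)` the conditional probability of `Y = 1` in a `(T, Z)`-stratum. If, in each
of the four strata of probability `s`, both the sample frequency of the `Y = 1` cell and that of the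
whole stratum are within `η s` of the truth, every plug-in ratio is within `2η` of the true one and
the plug-in ATE is within `η (4 + 2A)` of `ATE p`. For `η = ε / (4 + 2A) > ε / 6`, Hoeffding's
inequality and the sample-size assumption make each of these eight deviations have probability
`< δ / 8`, and a union bound concludes.
-/

open Real Finset

namespace ProbabilityTheory

variable {Ω : Type*} [MeasurableSpace Ω] {μ : Measure Ω} [IsProbabilityMeasure μ]

lemma measureReal_le_abs_sum_sub_integral_le {ι : Type*} [Fintype ι] {X : ι → Ω → ℝ}
    (hindep : iIndepFun X μ) (hmeas : ∀ i, Measurable (X i))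
    (hX : ∀ i, ∀ᵐ ω ∂μ, X i ω ∈ Set.Icc 0 1) {t : ℝ} (ht : 0 ≤ t) :
    μ.real {ω | t ≤ |∑ i, (X i ω - μ[X i])|} ≤ 2 * exp (-2 * t ^ 2 / Fintype.card ι) := by
  have hsubG (i : ι) :
      HasSubgaussianMGF (fun ω ↦ X i ω - μ[X i]) ((‖(1 : ℝ) - 0‖₊ / 2) ^ 2) μ :=
    hasSubgaussianMGF_of_mem_Icc (hmeas i).aemeasurable (hX i)
  have hindep' : iIndepFun (fun i ω ↦ X i ω - μ[X i]) μ :=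
    hindep.comp (fun (i : ι) (y : ℝ) ↦ y - ∫ ω, X i ω ∂μ) (fun _ ↦ measurable_id.sub_const _)
  have hupper := HasSubgaussianMGF.measure_sum_ge_le_of_iIndepFun hindep' (s := univ)
    (fun i _ ↦ hsubG i) ht
  have hlower := HasSubgaussianMGF.measure_sum_ge_le_of_iIndepFun
    (hindep'.comp (fun _ y ↦ -y) (fun _ ↦ measurable_neg)) (s := univ)
    (fun i _ ↦ (hsubG i).neg) ht
  have hexp : -t ^ 2 / (2 * ((∑ _i : ι, (‖(1 : ℝ) - 0‖₊ / 2) ^ 2 : NNReal) : ℝ))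
      = -2 * t ^ 2 / Fintype.card ι := by
    norm_num
    ring
  rw [hexp] at hupper hlower
  calc μ.real {ω | t ≤ |∑ i, (X i ω - μ[X i])|}
      ≤ μ.real ({ω | t ≤ ∑ i, (X i ω - μ[X i])} ∪ {ω | t ≤ ∑ i, -(X i ω - μ[X i])}) := by
        refine measureReal_mono (fun ω hω ↦ ?_)
        simpa only [Set.mem_ofPred_eq, Set.mem_union, sum_neg_distrib] using le_abs.mp hω
    _ ≤ _ := measureReal_union_le _ _
    _ ≤ 2 * exp (-2 * t ^ 2 / Fintype.card ι) := by
        simp only [Function.comp_apply] at hlower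
        linarith

lemma measureReal_le_abs_freq_sub_le {α : Type*} [MeasurableSpace α] {m : ℕ} (hm : 0 < m)
    {V : Fin m → Ω → α} (hV : ∀ i, Measurable (V i)) (hindep : iIndepFun V μ)
    {S : Set α} [DecidablePred (· ∈ S)] (hS : MeasurableSet S) {r : ℝ}
    (hr : ∀ i, μ.real (V i ⁻¹' S) = r) {τ : ℝ} (hτ : 0 ≤ τ) :
    μ.real {ω | τ ≤ |(#{i | V i ω ∈ S} : ℝ) / m - r|} ≤ 2 * exp (-2 * m * τ ^ 2) := by
  set X : Fin m → Ω → ℝ := fun i ↦ S.indicator 1 ∘ V i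
  have hmean (i : Fin m) : μ[X i] = r := by
    rw [← hr i, ← integral_indicator_one (hV i hS)]
    rfl
  have hsum (ω : Ω) : ∑ i, (X i ω - μ[X i]) = #{i | V i ω ∈ S} - m * r := by
    simp only [sum_sub_distrib, hmean, sum_const, card_univ, Fintype.card_fin, nsmul_eq_mul]
    simp only [X, Function.comp_apply, Set.indicator_apply, Pi.one_apply, sum_boole]
  have hm' : (0 : ℝ) < m := by exact_mod_cast hm
  calc μ.real {ω | τ ≤ |(#{i | V i ω ∈ S} : ℝ) / m - r|}
      = μ.real {ω | m * τ ≤ |∑ i, (X i ω - μ[X i])|} := by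
        congr 1; ext ω
        rw [Set.mem_ofPred_eq, Set.mem_ofPred_eq, hsum, ← mul_le_mul_iff_of_pos_left hm',
          ← abs_of_pos hm', ← abs_mul, abs_of_pos hm', mul_sub, mul_div_cancel₀ _ hm'.ne']
    _ ≤ 2 * exp (-2 * (m * τ) ^ 2 / Fintype.card (Fin m)) :=
        measureReal_le_abs_sum_sub_integral_le
          (hindep.comp (fun _ ↦ S.indicator 1) (fun _ ↦ measurable_one.indicator hS))
          (fun i ↦ (measurable_one.indicator hS).comp (hV i))
          (fun i ↦ ae_of_all _ fun ω ↦ by by_cases h : V i ω ∈ S <;> simp [h]) (by positivity)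
    _ = 2 * exp (-2 * m * τ ^ 2) := by
        rw [Fintype.card_fin]; congr 2; field_simp

end ProbabilityTheory

section Empirical

variable {Ω α : Type*} [DecidableEq α] {m : ℕ}

noncomputable def empiricalDist (V : Fin m → Ω → α) (ω : Ω) (j : α) : ℝ :=
  #{i | V i ω = j} / m

lemma sum_empiricalDist (V : Fin m → Ω → α) (ω : Ω) (S : Finset α) :
    ∑ j ∈ S, empiricalDist V ω j = #{i | V i ω ∈ S} / m := by
  simp only [empiricalDist, ← sum_div, natCast_card_filter]
  rw [sum_comm]
  simp

def StratumClose (p q : α → ℝ) (η : ℝ) (a b : α) : Prop :=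
  |q a - p a| < η * (p a + p b) ∧ |q a + q b - (p a + p b)| < η * (p a + p b)

variable [MeasurableSpace Ω] {μ : Measure Ω} [IsProbabilityMeasure μ]
  [MeasurableSpace α] [MeasurableSingletonClass α]
  {V : Fin m → Ω → α} {p : α → ℝ}

lemma measureReal_le_abs_sum_empiricalDist_sub_le (hm : 0 < m) (hV : ∀ i, Measurable (V i))
    (hindep : iIndepFun V μ) (hp : ∀ i j, μ.real {ω | V i ω = j} = p j) (S : Finset α)
    {τ : ℝ} (hτ : 0 ≤ τ) :
    μ.real {ω | τ ≤ |∑ j ∈ S, empiricalDist V ω j - ∑ j ∈ S, p j|}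
      ≤ 2 * exp (-2 * m * τ ^ 2) := by
  simp_rw [sum_empiricalDist]
  refine measureReal_le_abs_freq_sub_le hm hV hindep S.measurableSet (fun i ↦ ?_) hτ
  rw [← sum_measureReal_preimage_singleton _ fun j _ ↦ hV i (measurableSet_singleton j)]
  exact sum_congr rfl fun j _ ↦ hp i j

lemma measureReal_not_stratumClose_le (hm : 0 < m) (hV : ∀ i, Measurable (V i))
    (hindep : iIndepFun V μ) (hp : ∀ i j, μ.real {ω | V i ω = j} = p j) {η : ℝ} {a b : α}
    (hab : a ≠ b) (hτ : 0 ≤ η * (p a + p b)) :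
    μ.real {ω | ¬StratumClose p (empiricalDist V ω) η a b}
      ≤ 4 * exp (-2 * m * (η * (p a + p b)) ^ 2) := by
  have ha := measureReal_le_abs_sum_empiricalDist_sub_le hm hV hindep hp {a} hτ
  have hab' := measureReal_le_abs_sum_empiricalDist_sub_le hm hV hindep hp {a, b} hτ
  simp only [sum_singleton] at ha
  simp only [sum_pair hab] at hab'
  calc μ.real {ω | ¬StratumClose p (empiricalDist V ω) η a b}
      ≤ μ.real ({ω | η * (p a + p b) ≤ |empiricalDist V ω a - p a|} ∪
          {ω | η * (p a + p b) ≤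
            |empiricalDist V ω a + empiricalDist V ω b - (p a + p b)|}) := by
        refine measureReal_mono fun ω hω ↦ ?_
        simpa only [Set.mem_ofPred_eq, Set.mem_union, StratumClose, not_and_or, not_lt] using hω
    _ ≤ _ := measureReal_union_le _ _
    _ ≤ 4 * exp (-2 * m * (η * (p a + p b)) ^ 2) := by linarith

end Empirical

lemma abs_div_sub_div_lt {x y x' y' τ : ℝ} (hy : 0 < y) (hy' : 0 < y') (hx' : 0 ≤ x')
    (hxy' : x' ≤ y') (hx : |x' - x| < τ) (hyy : |y' - y| < τ) :
    |x' / y' - x / y| < 2 * τ / y := by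
  have hratio : |x' / y'| ≤ 1 := by
    rw [abs_of_nonneg (div_nonneg hx' hy'.le)]
    exact div_le_one_of_le₀ hxy' hy'.le
  have hsplit : x' / y' - x / y = (x' - x - x' / y' * (y' - y)) / y := by
    field_simp
    ring
  rw [hsplit, abs_div, abs_of_pos hy, div_lt_div_iff_of_pos_right hy]
  calc |x' - x - x' / y' * (y' - y)| ≤ |x' - x| + |x' / y'| * |y' - y| := by
        rw [← abs_mul]; exact abs_sub _ _
    _ < 2 * τ := by nlinarith [abs_nonneg (x' / y'), abs_nonneg (y' - y)]

lemma StratumClose.abs_div_sub_div_lt {α : Type*} {p q : α → ℝ} {η : ℝ} {a b : α}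
    (h : StratumClose p q η a b) (hs : 0 < p a + p b) (hη : η ≤ 1) (hqa : 0 ≤ q a)
    (hqb : 0 ≤ q b) :
    |q a / (q a + q b) - p a / (p a + p b)| < 2 * η := by
  have hq : 0 < q a + q b := by nlinarith [(abs_lt.mp h.2).1]
  calc |q a / (q a + q b) - p a / (p a + p b)|
      < 2 * (η * (p a + p b)) / (p a + p b) :=
        _root_.abs_div_sub_div_lt hs hq hqa (by linarith) h.1 h.2
    _ = 2 * η := by field_simp

lemma abs_mix_sub_mix_le {A A' u u' v v' c : ℝ} (hA0 : 0 ≤ A) (hA1 : A ≤ 1) (hu' : |u'| ≤ 1)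
    (hv' : |v'| ≤ 1) (hu : |u' - u| ≤ c) (hv : |v' - v| ≤ c) :
    |(A' * u' + (1 - A') * v') - (A * u + (1 - A) * v)| ≤ 2 * |A' - A| + c := by
  have hsplit : (A' * u' + (1 - A') * v') - (A * u + (1 - A) * v)
      = (A' - A) * (u' - v') + (A * (u' - u) + (1 - A) * (v' - v)) := by ring
  have huv : |u' - v'| ≤ 2 := (abs_sub _ _).trans (by linarith)
  rw [hsplit]
  refine (abs_add_le _ _).trans (add_le_add ?_ ((abs_add_le _ _).trans ?_))
  · rw [abs_mul, mul_comm]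
    exact mul_le_mul_of_nonneg_right huv (abs_nonneg _)
  · rw [abs_mul, abs_mul, abs_of_nonneg hA0, abs_of_nonneg (sub_nonneg.mpr hA1)]
    nlinarith

lemma ATE_eq_stratified (p : Fin 8 → ℝ) :
    ATE p = (p 0 + p 2 + p 4 + p 6) * (p 6 / (p 6 + p 2) - p 4 / (p 4 + p 0))
      + (1 - (p 0 + p 2 + p 4 + p 6)) * (p 7 / (p 7 + p 3) - p 5 / (p 5 + p 1)) := by
  unfold ATE
  ring

lemma abs_ATE_sub_lt {p q : Fin 8 → ℝ} (hpsum : ∑ j, p j = 1)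
    (hq : ∀ j, 0 ≤ q j) {η : ℝ} (hη : η ≤ 1)
    (h62 : 0 < p 6 + p 2) (h73 : 0 < p 7 + p 3) (h40 : 0 < p 4 + p 0) (h51 : 0 < p 5 + p 1)
    (c62 : StratumClose p q η 6 2) (c73 : StratumClose p q η 7 3)
    (c40 : StratumClose p q η 4 0) (c51 : StratumClose p q η 5 1) :
    |ATE q - ATE p| < η * (4 + 2 * (p 0 + p 2 + p 4 + p 6)) := by
  rw [Fin.sum_univ_eight] at hpsum
  have hratio (a b : Fin 8) : q a / (q a + q b) ∈ Set.Icc 0 1 :=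
    ⟨div_nonneg (hq a) (add_nonneg (hq a) (hq b)),
      div_le_one_of_le₀ (le_add_of_nonneg_right (hq b)) (add_nonneg (hq a) (hq b))⟩
  have hdiff (a b c d : Fin 8) : |q a / (q a + q b) - q c / (q c + q d)| ≤ 1 :=
    abs_sub_le_of_nonneg_of_le (hratio a b).1 (hratio a b).2 (hratio c d).1 (hratio c d).2
  have r62 := c62.abs_div_sub_div_lt h62 hη (hq 6) (hq 2)
  have r73 := c73.abs_div_sub_div_lt h73 hη (hq 7) (hq 3)
  have r40 := c40.abs_div_sub_div_lt h40 hη (hq 4) (hq 0)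
  have r51 := c51.abs_div_sub_div_lt h51 hη (hq 5) (hq 1)
  rw [abs_lt] at r62 r73 r40 r51
  have hA : |(q 0 + q 2 + q 4 + q 6) - (p 0 + p 2 + p 4 + p 6)|
      < η * (p 0 + p 2 + p 4 + p 6) := by
    have := abs_lt.mp c62.2
    have := abs_lt.mp c40.2
    rw [abs_lt]
    constructor <;> linarith
  rw [ATE_eq_stratified q, ATE_eq_stratified p]
  calc _ ≤ 2 * |(q 0 + q 2 + q 4 + q 6) - (p 0 + p 2 + p 4 + p 6)| + 4 * η := by
        refine abs_mix_sub_mix_le (by linarith) (by linarith) (hdiff _ _ _ _) (hdiff _ _ _ _)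
          ?_ ?_ <;> rw [abs_le] <;> constructor <;> linarith
    _ < η * (4 + 2 * (p 0 + p 2 + p 4 + p 6)) := by linarith

-- `(a, b)` are the `Y = 1` and `Y = 0` cells of one `(T, Z)`-stratum, indexed as in `ATE`.
def ateStrata : Finset (Fin 8 × Fin 8) := {(6, 2), (7, 3), (4, 0), (5, 1)}

lemma measureReal_le_abs_ATE_empiricalDist_sub_le {Ω : Type*} [MeasurableSpace Ω]
    {μ : Measure Ω} [IsProbabilityMeasure μ] {m : ℕ} (hm : 0 < m) {V : Fin m → Ω → Fin 8}
    (hV : ∀ i, Measurable (V i)) (hindep : iIndepFun V μ) {p : Fin 8 → ℝ}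
    (hp : ∀ i j, μ.real {ω | V i ω = j} = p j) (hpsum : ∑ j, p j = 1)
    (hstrata : ∀ c ∈ ateStrata, 0 < p c.1 + p c.2) {η : ℝ} (hη0 : 0 ≤ η) (hη1 : η ≤ 1) :
    μ.real {ω | η * (4 + 2 * (p 0 + p 2 + p 4 + p 6)) ≤ |ATE (empiricalDist V ω) - ATE p|}
      ≤ ∑ c ∈ ateStrata, 4 * exp (-2 * m * (η * (p c.1 + p c.2)) ^ 2) := by
  have hbad : {ω | η * (4 + 2 * (p 0 + p 2 + p 4 + p 6)) ≤ |ATE (empiricalDist V ω) - ATE p|}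
      ⊆ ⋃ c ∈ ateStrata, {ω | ¬StratumClose p (empiricalDist V ω) η c.1 c.2} := by
    intro ω hω
    by_contra hclose
    simp only [Set.mem_iUnion, Set.mem_ofPred_eq, not_exists, not_not] at hω hclose
    exact hω.not_gt <| abs_ATE_sub_lt hpsum (fun j ↦ by unfold empiricalDist; positivity) hη1
      (hstrata (6, 2) (by decide)) (hstrata (7, 3) (by decide)) (hstrata (4, 0) (by decide))
      (hstrata (5, 1) (by decide)) (hclose (6, 2) (by decide)) (hclose (7, 3) (by decide))
      (hclose (4, 0) (by decide)) (hclose (5, 1) (by decide))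
  calc _ ≤ μ.real (⋃ c ∈ ateStrata, {ω | ¬StratumClose p (empiricalDist V ω) η c.1 c.2}) :=
        measureReal_mono hbad (measure_ne_top _ _)
    _ ≤ ∑ c ∈ ateStrata, μ.real {ω | ¬StratumClose p (empiricalDist V ω) η c.1 c.2} :=
        measureReal_biUnion_finset_le _ _
    _ ≤ ∑ c ∈ ateStrata, 4 * exp (-2 * m * (η * (p c.1 + p c.2)) ^ 2) := by
        refine sum_le_sum fun c hc ↦ ?_
        have hne : c.1 ≠ c.2 := by revert c; decide
        exact measureReal_not_stratumClose_le hm hV hindep hp hne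
          (mul_nonneg hη0 (hstrata c hc).le)

lemma four_mul_exp_lt_of_le {δ ε η s m : ℝ} (hδ0 : 0 < δ) (hδ1 : δ < 1) (hs : 0 < s)
    (hε : 0 < ε) (hη : ε < 6 * η) (hm : 18 * log (16 / δ) / ε ^ 2 * (1 / s ^ 2) ≤ m) :
    4 * exp (-2 * m * (η * s) ^ 2) < δ / 4 := by
  have hL : 0 < log (16 / δ) := log_pos (by rw [lt_div_iff₀ hδ0]; linarith)
  rw [div_mul_div_comm, mul_one, div_le_iff₀ (by positivity)] at hm
  have hεη : ε ^ 2 < 36 * η ^ 2 := by nlinarith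
  have hms : 0 < m * s ^ 2 := by nlinarith
  calc 4 * exp (-2 * m * (η * s) ^ 2) < 4 * exp (-log (16 / δ)) := by gcongr; nlinarith
    _ = δ / 4 := by
        rw [exp_neg, exp_log (by positivity)]
        field_simp
        norm_num

/-- Sample complexity for estimating the ATE without observational data
(Theorem 1 of the paper). -/
theorem ate_sample_complexity_no_observational
    {Ω : Type*} [MeasurableSpace Ω] (μ : Measure Ω) [IsProbabilityMeasure μ]
    (m : ℕ) (hm0 : 0 < m)
    (p : Fin 8 → ℝ) (hp : ∀ j, 0 ≤ p j) (hpsum : ∑ j, p j = 1)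
    (V : Fin m → Ω → Fin 8) (hVmeas : ∀ i, Measurable (V i))
    (hindep : iIndepFun V μ)
    (hdist : ∀ i j, μ {ω | V i ω = j} = ENNReal.ofReal (p j))
    (ε δ : ℝ) (hε0 : 0 < ε) (hε1 : ε ≤ 1) (hδ0 : 0 < δ) (hδ1 : δ < 1)
    (h37 : 0 < p 2 + p 6) (h48 : 0 < p 3 + p 7)
    (h15 : 0 < p 0 + p 4) (h26 : 0 < p 1 + p 5)
    (hm : (m : ℝ) ≥ 18 * Real.log (16 / δ) / ε ^ 2 *
      max (max (1 / (p 2 + p 6) ^ 2) (1 / (p 3 + p 7) ^ 2))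
          (max (1 / (p 0 + p 4) ^ 2) (1 / (p 1 + p 5) ^ 2))) :
    μ {ω | ε ≤
        |ATE (fun j => ((Finset.univ.filter fun i => V i ω = j).card : ℝ) / m) - ATE p|}
      < ENNReal.ofReal δ := by
  set A := p 0 + p 2 + p 4 + p 6
  have hA : 0 < A ∧ A < 1 := by
    rw [Fin.sum_univ_eight] at hpsum
    constructor <;> linarith [hp 0, hp 1, hp 2, hp 3, hp 4, hp 5, hp 6, hp 7]
  set η := ε / (4 + 2 * A)
  have hηε : η * (4 + 2 * A) = ε := div_mul_cancel₀ _ (by linarith)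
  -- `A < 1` is the slack that makes the final bound strict.
  have hη6 : ε < 6 * η := by nlinarith
  have hstrata : ∀ c ∈ ateStrata, 0 < p c.1 + p c.2 ∧
      18 * log (16 / δ) / ε ^ 2 * (1 / (p c.1 + p c.2) ^ 2) ≤ m := by
    have hcoef : 0 ≤ 18 * log (16 / δ) / ε ^ 2 :=
      div_nonneg (mul_nonneg (by norm_num) (log_nonneg (by rw [le_div_iff₀ hδ0]; linarith)))
        (by positivity)
    simp only [ateStrata, mem_insert, mem_singleton, forall_eq_or_imp, forall_eq]
    refine ⟨⟨?_, ?_⟩, ⟨?_, ?_⟩, ⟨?_, ?_⟩, ⟨?_, ?_⟩⟩ <;>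
      first | linarith | exact le_trans (mul_le_mul_of_nonneg_left (by simp [add_comm]) hcoef) hm
  have hprob := measureReal_le_abs_ATE_empiricalDist_sub_le hm0 hVmeas hindep
    (fun i j ↦ by rw [measureReal_def, hdist, ENNReal.toReal_ofReal (hp j)]) hpsum
    (fun c hc ↦ (hstrata c hc).1) (η := η) (div_pos hε0 (by linarith)).le
    ((div_le_one (by linarith)).mpr (by linarith))
  rw [hηε] at hprob
  rw [ENNReal.lt_ofReal_iff_toReal_lt (measure_ne_top _ _), ← measureReal_def]
  calc _ ≤ _ := hprob
    _ < ∑ _c ∈ ateStrata, δ / 4 := sum_lt_sum_of_nonempty ⟨(6, 2), by decide⟩ fun c hc ↦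
        four_mul_exp_lt_of_le hδ0 hδ1 (hstrata c hc).1 hε0 hη6 (hstrata c hc).2
    _ = δ := by simp [ateStrata]; ring
end

section
/- With infinite observational data and sampling according to the distribution: in the stratified sampling model with allocation (x_1, x_2, x_3, x_4) = (a_1, a_2, a_3, a_4), suppose 0 < ε ≤ 1, 0 < δ < 1, each x_j·m is a positive integer, and p_3+p_7 > 0, p_4+p_8 > 0, p_1+p_5 > 0, p_2+p_6 > 0. If m ≥ (18 ln(8/δ)/ε²) · max( (a_2+a_4)/min((p_3+p_7)², (p_4+p_8)²), (a_1+a_3)/min((p_1+p_5)², (p_2+p_6)²) ), then P(|ATE-hat − ATE(p_1,...,p_8)| ≥ ε) < δ. -/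
open MeasureTheory ProbabilityTheory

/-- The joint distribution `p` of `(Y,T,Z)` obtained from the observational
distribution `a` of `(Y,T)` and the conditional probabilities
`q j = P(Z=0 | (Y,T) = j-th outcome)`:
`p_1 = a_1 q_1, p_2 = a_1(1-q_1), ..., p_8 = a_4(1-q_4)`. -/
noncomputable def pOf (a q : Fin 4 → ℝ) : Fin 8 → ℝ :=
  ![a 0 * q 0, a 0 * (1 - q 0), a 1 * q 1, a 1 * (1 - q 1),
    a 2 * q 2, a 2 * (1 - q 2), a 3 * q 3, a 3 * (1 - q 3)]

/-!
Each empirical frequency `q̂ j` is the mean of `n j = a j * m` independent Bernoulli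
variables, so Hoeffding's inequality gives `P(|q̂ j - q j| ≥ t j) ≤ 2 exp (-2 n j (t j)²)`.
With `L = log (8 / δ)` and `t j = √(9 L / (16 m)) / √(a j)` every exponent equals `9 L / 8`,
and the union bound over the four strata gives `8 exp (-9 L / 8) < 8 exp (-L) = δ`.
On the complementary event, `ATE = S (r₆₂ - r₄₀) + (1 - S) (r₇₃ - r₅₁)` with `S = P(Z = 0)` and
`r_ik = p_i / (p_i + p_k)`; the sample-size bound makes every ratio move by at most `ε / √18`
and `S` by at most `ε / 4`, hence `ATE` by less than `ε`.
-/

open Real Finset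

namespace ProbabilityTheory.HasSubgaussianMGF

variable {Ω : Type*} {mΩ : MeasurableSpace Ω} {μ : Measure Ω} {X : Ω → ℝ} {c : NNReal}

lemma measure_abs_ge_le [IsFiniteMeasure μ] (h : HasSubgaussianMGF X c μ) {ε : ℝ}
    (hε : 0 ≤ ε) : μ.real {ω | ε ≤ |X ω|} ≤ 2 * exp (-ε ^ 2 / (2 * c)) := by
  have hsub : {ω | ε ≤ |X ω|} ⊆ {ω | ε ≤ X ω} ∪ {ω | ε ≤ (-X) ω} := fun ω hω ↦ by
    simpa using le_abs.1 hω
  calc μ.real {ω | ε ≤ |X ω|} ≤ μ.real {ω | ε ≤ X ω} + μ.real {ω | ε ≤ (-X) ω} :=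
        (measureReal_mono hsub).trans (measureReal_union_le _ _)
    _ ≤ exp (-ε ^ 2 / (2 * c)) + exp (-ε ^ 2 / (2 * c)) :=
        add_le_add (h.measure_ge_le hε) (h.neg.measure_ge_le hε)
    _ = 2 * exp (-ε ^ 2 / (2 * c)) := by ring

end ProbabilityTheory.HasSubgaussianMGF

section

variable {Ω : Type*} [MeasurableSpace Ω] {μ : Measure Ω}

lemma hasSubgaussianMGF_indicator_sub_measureReal [IsProbabilityMeasure μ] {s : Set Ω}
    (hs : MeasurableSet s) :
    HasSubgaussianMGF (fun ω ↦ s.indicator 1 ω - μ.real s) (1 / 4) μ := by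
  convert hasSubgaussianMGF_of_mem_Icc (X := s.indicator 1) (μ := μ) (a := 0) (b := 1)
    (measurable_const.indicator hs).aemeasurable
    (ae_of_all _ fun ω ↦ by by_cases h : ω ∈ s <;> simp [h]) using 2
  · rw [integral_indicator_one hs]
  · norm_num

lemma measure_abs_card_div_sub_ge_le [IsProbabilityMeasure μ] {n : ℕ} (hn : 0 < n)
    {V : Fin n → Ω → Bool} (hV : ∀ i, Measurable (V i)) (hind : iIndepFun V μ) {q : ℝ}
    (hq : 0 ≤ q) (hdist : ∀ i, μ {ω | V i ω = true} = ENNReal.ofReal q) {t : ℝ} (ht : 0 ≤ t) :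
    μ {ω | t ≤ |(#{i | V i ω = true} : ℝ) / n - q|}
      ≤ ENNReal.ofReal (2 * exp (-2 * n * t ^ 2)) := by
  set X : Fin n → Ω → ℝ := fun i ω ↦ {ω | V i ω = true}.indicator 1 ω - q
  have hX_indep : iIndepFun X μ :=
    hind.comp (fun _ b ↦ {b | b = true}.indicator 1 b - q) fun _ ↦ .of_discrete
  have hX_subG (i : Fin n) : HasSubgaussianMGF (X i) (1 / 4) μ := by
    have hqi : μ.real {ω | V i ω = true} = q := by
      rw [measureReal_def, hdist i, ENNReal.toReal_ofReal hq]
    have := hasSubgaussianMGF_indicator_sub_measureReal (μ := μ) (s := {ω | V i ω = true})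
      (hV i (measurableSet_singleton true))
    rwa [hqi] at this
  have hn' : (0 : ℝ) < n := Nat.cast_pos.2 hn
  have hevent : {ω | t ≤ |(#{i | V i ω = true} : ℝ) / n - q|}
      = {ω | n * t ≤ |∑ i, X i ω|} := by
    ext ω
    have hsum : ∑ i, X i ω = #{i | V i ω = true} - n * q := by
      simp [X, sum_sub_distrib, Set.indicator_apply, sum_boole]
    have hdiv : (#{i | V i ω = true} : ℝ) / n - q = (#{i | V i ω = true} - n * q) / n := by
      field_simp
    simp only [Set.mem_ofPred_eq, hsum, hdiv, abs_div, Nat.abs_cast, le_div_iff₀ hn']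
    ring_nf
  have hsum_subG := HasSubgaussianMGF.sum_of_iIndepFun hX_indep (s := univ)
    fun i _ ↦ hX_subG i
  rw [hevent, ← ofReal_measureReal]
  refine ENNReal.ofReal_le_ofReal ((hsum_subG.measure_abs_ge_le (by positivity)).trans_eq ?_)
  simp only [sum_const, card_univ, Fintype.card_fin, nsmul_eq_mul, NNReal.coe_mul,
    NNReal.coe_natCast, NNReal.coe_div, NNReal.coe_one, NNReal.coe_ofNat]
  congr 2
  field_simp
  ring

lemma measure_iUnion_le_ofReal_card_mul {ι : Type*} [Fintype ι] {E : ι → Set Ω} {c : ℝ}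
    (h : ∀ i, μ (E i) ≤ ENNReal.ofReal c) :
    μ (⋃ i, E i) ≤ ENNReal.ofReal (Fintype.card ι * c) := by
  refine (measure_iUnion_fintype_le μ E).trans ((sum_le_sum fun i _ ↦ h i).trans_eq ?_)
  rw [sum_const, card_univ, nsmul_eq_mul, ENNReal.ofReal_mul (Nat.cast_nonneg _),
    ENNReal.ofReal_natCast]

end

lemma card_filter_div_mem_Icc {n : ℕ} (p : Fin n → Prop) [DecidablePred p] :
    (#{i | p i} : ℝ) / n ∈ Set.Icc 0 1 := by
  refine ⟨by positivity, div_le_one_of_le₀ ?_ n.cast_nonneg⟩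
  exact_mod_cast (card_filter_le _ _).trans (card_fin n).le

lemma div_add_mem_Icc {u v : ℝ} (hu : 0 ≤ u) (hv : 0 ≤ v) : u / (u + v) ∈ Set.Icc 0 1 :=
  ⟨div_nonneg hu (add_nonneg hu hv),
    div_le_one_of_le₀ (le_add_of_nonneg_right hv) (add_nonneg hu hv)⟩

lemma abs_div_add_sub_div_add_le {u v u' v' e : ℝ} (hu : 0 ≤ u) (hv : 0 ≤ v)
    (huv : 0 < u + v) (huv' : 0 < u' + v') (hu' : |u' - u| ≤ e) (hv' : |v' - v| ≤ e) :
    |u' / (u' + v') - u / (u + v)| ≤ e / (u' + v') := by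
  have hdiff : u' / (u' + v') - u / (u + v)
      = ((u' - u) * v - u * (v' - v)) / ((u' + v') * (u + v)) := by
    field_simp
    ring
  have hnum : |(u' - u) * v - u * (v' - v)| ≤ e * (u + v) := by
    calc |(u' - u) * v - u * (v' - v)| ≤ |u' - u| * v + u * |v' - v| := by
          simpa [abs_mul, abs_of_nonneg hu, abs_of_nonneg hv]
            using abs_sub ((u' - u) * v) (u * (v' - v))
      _ ≤ e * v + u * e := by gcongr
      _ = e * (u + v) := by ring
  rw [hdiff, abs_div, abs_of_pos (mul_pos huv' huv), div_le_div_iff₀ (mul_pos huv' huv) huv']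
  nlinarith

lemma sq_div_add_sub_div_add_le {u v u' v' κ A B ε : ℝ} (hu : 0 ≤ u) (hv : 0 ≤ v)
    (huv : 0 < u + v) (hA : 0 ≤ A) (hB : 0 ≤ B) (hε0 : 0 ≤ ε) (hε1 : ε ≤ 1) (hκ : 0 ≤ κ)
    (hu' : |u' - u| ≤ κ * √A) (hv' : |v' - v| ≤ κ * √B)
    (hsize : 32 * κ ^ 2 * (A + B) ≤ ε ^ 2 * (u + v) ^ 2) :
    18 * (u' / (u' + v') - u / (u + v)) ^ 2 ≤ ε ^ 2 := by
  set e := κ * √(A + B)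
  have he_sq : e ^ 2 = κ ^ 2 * (A + B) := by
    rw [mul_pow, sq_sqrt (add_nonneg hA hB)]
  have hsum : |u' - u| + |v' - v| ≤ (u + v) / 4 := by
    have hsq : (|u' - u| + |v' - v|) ^ 2 ≤ ((u + v) / 4) ^ 2 := by
      calc (|u' - u| + |v' - v|) ^ 2 ≤ (κ * √A + κ * √B) ^ 2 := by gcongr
        _ ≤ 2 * ((κ * √A) ^ 2 + (κ * √B) ^ 2) := add_sq_le
        _ = 2 * κ ^ 2 * (A + B) := by rw [mul_pow, mul_pow, sq_sqrt hA, sq_sqrt hB]; ring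
        _ ≤ ((u + v) / 4) ^ 2 := by
          nlinarith [sq_nonneg (u + v), pow_le_one₀ hε0 hε1 (n := 2)]
    exact (pow_le_pow_iff_left₀ (by positivity) (by positivity) two_ne_zero).1 hsq
  have huv' : 3 * (u + v) / 4 ≤ u' + v' := by
    linarith [neg_abs_le (u' - u), neg_abs_le (v' - v)]
  have hratio := abs_div_add_sub_div_add_le hu hv huv (by linarith)
    (hu'.trans (mul_le_mul_of_nonneg_left (sqrt_le_sqrt (le_add_of_nonneg_right hB)) hκ))
    (hv'.trans (mul_le_mul_of_nonneg_left (sqrt_le_sqrt (le_add_of_nonneg_left hA)) hκ))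
  calc 18 * (u' / (u' + v') - u / (u + v)) ^ 2
      = 18 * |u' / (u' + v') - u / (u + v)| ^ 2 := by rw [sq_abs]
    _ ≤ 18 * (e / (3 * (u + v) / 4)) ^ 2 := by
        gcongr
        exact hratio.trans (div_le_div_of_nonneg_left (by positivity) (by positivity) huv')
    _ = 32 * e ^ 2 / (u + v) ^ 2 := by field_simp; ring
    _ ≤ ε ^ 2 := by rw [div_le_iff₀ (by positivity), he_sq]; linarith

lemma abs_sub_sub_lt_half {x x' y y' ε : ℝ} (hε : 0 < ε) (hx : 18 * (x' - x) ^ 2 ≤ ε ^ 2)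
    (hy : 18 * (y' - y) ^ 2 ≤ ε ^ 2) : |(x' - y') - (x - y)| < ε / 2 := by
  refine abs_lt_of_sq_lt_sq ?_ (by positivity)
  calc ((x' - y') - (x - y)) ^ 2 = ((x' - x) + -(y' - y)) ^ 2 := by ring
    _ ≤ 2 * ((x' - x) ^ 2 + (-(y' - y)) ^ 2) := add_sq_le
    _ < (ε / 2) ^ 2 := by nlinarith

lemma abs_convex_comb_sub_lt {S S' R R' Q Q' ε : ℝ} (hS'0 : 0 ≤ S') (hS'1 : S' ≤ 1)
    (hS : |S' - S| ≤ ε / 4) (hRQ : |R - Q| ≤ 2) (hR : |R' - R| < ε / 2)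
    (hQ : |Q' - Q| < ε / 2) :
    |(S' * R' + (1 - S') * Q') - (S * R + (1 - S) * Q)| < ε := by
  have hdecomp : (S' * R' + (1 - S') * Q') - (S * R + (1 - S) * Q)
      = S' * (R' - R) + (1 - S') * (Q' - Q) + (S' - S) * (R - Q) := by ring
  rw [hdecomp]
  calc |S' * (R' - R) + (1 - S') * (Q' - Q) + (S' - S) * (R - Q)|
      ≤ S' * |R' - R| + (1 - S') * |Q' - Q| + |S' - S| * |R - Q| := by
        refine (abs_add_le _ _).trans (add_le_add ((abs_add_le _ _).trans_eq ?_) (abs_mul _ _).le)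
        rw [abs_mul, abs_mul, abs_of_nonneg hS'0, abs_of_nonneg (sub_nonneg.2 hS'1)]
    _ ≤ max |R' - R| |Q' - Q| + ε / 4 * 2 := by
        have hε : 0 ≤ ε := by linarith [abs_nonneg (R' - R)]
        have hmix : S' * |R' - R| + (1 - S') * |Q' - Q| ≤ max |R' - R| |Q' - Q| := by
          nlinarith [le_max_left |R' - R| |Q' - Q|, le_max_right |R' - R| |Q' - Q|]
        linarith [mul_le_mul hS hRQ (abs_nonneg _) (by positivity)]
    _ < ε / 2 + ε / 4 * 2 := by gcongr; exact max_lt hR hQ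
    _ = ε := by ring

lemma abs_ATE_sub_lt_s1 {p p' : Fin 8 → ℝ} {ε : ℝ} (hε : 0 < ε) (hp : ∀ i, 0 ≤ p i)
    (hS'0 : 0 ≤ p' 0 + p' 2 + p' 4 + p' 6) (hS'1 : p' 0 + p' 2 + p' 4 + p' 6 ≤ 1)
    (hS : |(p' 0 + p' 2 + p' 4 + p' 6) - (p 0 + p 2 + p 4 + p 6)| ≤ ε / 4)
    (h62 : 18 * (p' 6 / (p' 6 + p' 2) - p 6 / (p 6 + p 2)) ^ 2 ≤ ε ^ 2)
    (h73 : 18 * (p' 7 / (p' 7 + p' 3) - p 7 / (p 7 + p 3)) ^ 2 ≤ ε ^ 2)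
    (h40 : 18 * (p' 4 / (p' 4 + p' 0) - p 4 / (p 4 + p 0)) ^ 2 ≤ ε ^ 2)
    (h51 : 18 * (p' 5 / (p' 5 + p' 1) - p 5 / (p 5 + p 1)) ^ 2 ≤ ε ^ 2) :
    |ATE p' - ATE p| < ε := by
  have hATE (p : Fin 8 → ℝ) : ATE p
      = (p 0 + p 2 + p 4 + p 6) * (p 6 / (p 6 + p 2) - p 4 / (p 4 + p 0))
        + (1 - (p 0 + p 2 + p 4 + p 6)) * (p 7 / (p 7 + p 3) - p 5 / (p 5 + p 1)) := by
    unfold ATE; ring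
  have hRQ : |(p 6 / (p 6 + p 2) - p 4 / (p 4 + p 0))
      - (p 7 / (p 7 + p 3) - p 5 / (p 5 + p 1))| ≤ 2 := by
    have h62 := div_add_mem_Icc (hp 6) (hp 2)
    have h40 := div_add_mem_Icc (hp 4) (hp 0)
    have h73 := div_add_mem_Icc (hp 7) (hp 3)
    have h51 := div_add_mem_Icc (hp 5) (hp 1)
    rw [abs_le]
    constructor <;> linarith [h62.1, h62.2, h40.1, h40.2, h73.1, h73.2, h51.1, h51.2]
  rw [hATE, hATE]
  exact abs_convex_comb_sub_lt hS'0 hS'1 hS hRQ (abs_sub_sub_lt_half hε h62 h40)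
    (abs_sub_sub_lt_half hε h73 h51)

lemma pOf_nonneg {a q : Fin 4 → ℝ} (ha : ∀ j, 0 ≤ a j) (hq0 : ∀ j, 0 ≤ q j)
    (hq1 : ∀ j, q j ≤ 1) (i : Fin 8) : 0 ≤ pOf a q i := by
  have h0 (j) := mul_nonneg (ha j) (hq0 j)
  have h1 (j) := mul_nonneg (ha j) (sub_nonneg.2 (hq1 j))
  fin_cases i <;> simp [pOf, h0, h1]

section

variable {ι : Type*} [Fintype ι]

lemma sum_sqrt_le_sqrt_card {a : ι → ℝ} (ha : ∀ i, 0 ≤ a i) (hasum : ∑ i, a i = 1) :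
    ∑ i, √(a i) ≤ √(Fintype.card ι) := by
  simpa [hasum] using sum_sqrt_mul_sqrt_le univ ha fun _ ↦ zero_le_one

lemma abs_sum_mul_sub_sum_mul_le {a q q' : ι → ℝ} {κ : ℝ} (ha : ∀ i, 0 ≤ a i)
    (hasum : ∑ i, a i = 1) (hκ : 0 ≤ κ) (hclose : ∀ i, a i * |q' i - q i| ≤ κ * √(a i)) :
    |∑ i, a i * q' i - ∑ i, a i * q i| ≤ κ * √(Fintype.card ι) := by
  calc |∑ i, a i * q' i - ∑ i, a i * q i| ≤ ∑ i, a i * |q' i - q i| := by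
        rw [← sum_sub_distrib]
        refine (abs_sum_le_sum_abs _ _).trans_eq (sum_congr rfl fun i _ ↦ ?_)
        rw [← mul_sub, abs_mul, abs_of_nonneg (ha i)]
    _ ≤ ∑ i, κ * √(a i) := sum_le_sum fun i _ ↦ hclose i
    _ ≤ κ * √(Fintype.card ι) := by
        rw [← mul_sum]
        exact mul_le_mul_of_nonneg_left (sum_sqrt_le_sqrt_card ha hasum) hκ

end

lemma le_mul_of_mul_le_mul_sq {c s D k : ℝ} (hk : 0 ≤ k) (hD : 0 < D) (hDs : D ≤ s)
    (h : c * s ≤ k * D ^ 2) : c ≤ k * s := by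
  refine le_of_mul_le_mul_right (h.trans ?_) (hD.trans_le hDs)
  rw [mul_assoc, ← sq]
  gcongr

lemma abs_ATE_pOf_sub_lt {a q q' : Fin 4 → ℝ} {κ ε : ℝ} (ha : ∀ j, 0 ≤ a j)
    (hasum : ∑ j, a j = 1) (hq0 : ∀ j, 0 ≤ q j) (hq1 : ∀ j, q j ≤ 1) (hq'0 : ∀ j, 0 ≤ q' j)
    (hq'1 : ∀ j, q' j ≤ 1) (hε0 : 0 < ε) (hε1 : ε ≤ 1) (hκ : 0 ≤ κ)
    (hclose : ∀ j, a j * |q' j - q j| ≤ κ * √(a j))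
    (h13 : 0 < a 1 * q 1 + a 3 * q 3) (h13' : 0 < a 1 * (1 - q 1) + a 3 * (1 - q 3))
    (h02 : 0 < a 0 * q 0 + a 2 * q 2) (h02' : 0 < a 0 * (1 - q 0) + a 2 * (1 - q 2))
    (hsize13 : 32 * κ ^ 2 * (a 1 + a 3) ≤
      ε ^ 2 * min ((a 1 * q 1 + a 3 * q 3) ^ 2) ((a 1 * (1 - q 1) + a 3 * (1 - q 3)) ^ 2))
    (hsize02 : 32 * κ ^ 2 * (a 0 + a 2) ≤
      ε ^ 2 * min ((a 0 * q 0 + a 2 * q 2) ^ 2) ((a 0 * (1 - q 0) + a 2 * (1 - q 2)) ^ 2)) :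
    |ATE (pOf a q') - ATE (pOf a q)| < ε := by
  have hdev (j) : |a j * q' j - a j * q j| ≤ κ * √(a j) := by
    rw [← mul_sub, abs_mul, abs_of_nonneg (ha j)]; exact hclose j
  have hdev' (j) : |a j * (1 - q' j) - a j * (1 - q j)| ≤ κ * √(a j) := by
    rw [show a j * (1 - q' j) - a j * (1 - q j) = -(a j * q' j - a j * q j) by ring, abs_neg]
    exact hdev j
  have hmin13 := hsize13.trans (mul_le_mul_of_nonneg_left (min_le_left _ _) (sq_nonneg ε))
  have hmin13' := hsize13.trans (mul_le_mul_of_nonneg_left (min_le_right _ _) (sq_nonneg ε))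
  have hmin02 := hsize02.trans (mul_le_mul_of_nonneg_left (min_le_left _ _) (sq_nonneg ε))
  have hmin02' := hsize02.trans (mul_le_mul_of_nonneg_left (min_le_right _ _) (sq_nonneg ε))
  have h62 := sq_div_add_sub_div_add_le (mul_nonneg (ha 3) (hq0 3)) (mul_nonneg (ha 1) (hq0 1))
    (by linarith) (ha 3) (ha 1) hε0.le hε1 hκ (hdev 3) (hdev 1) (by linarith)
  have h73 := sq_div_add_sub_div_add_le (mul_nonneg (ha 3) (sub_nonneg.2 (hq1 3)))
    (mul_nonneg (ha 1) (sub_nonneg.2 (hq1 1))) (by linarith) (ha 3) (ha 1) hε0.le hε1 hκ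
    (hdev' 3) (hdev' 1) (by linarith)
  have h40 := sq_div_add_sub_div_add_le (mul_nonneg (ha 2) (hq0 2)) (mul_nonneg (ha 0) (hq0 0))
    (by linarith) (ha 2) (ha 0) hε0.le hε1 hκ (hdev 2) (hdev 0) (by linarith)
  have h51 := sq_div_add_sub_div_add_le (mul_nonneg (ha 2) (sub_nonneg.2 (hq1 2)))
    (mul_nonneg (ha 0) (sub_nonneg.2 (hq1 0))) (by linarith) (ha 2) (ha 0) hε0.le hε1 hκ
    (hdev' 2) (hdev' 0) (by linarith)
  have hκε : 64 * κ ^ 2 ≤ ε ^ 2 := by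
    have hle (j) : a j * q j ≤ a j := mul_le_of_le_one_right (ha j) (hq1 j)
    have h13 := le_mul_of_mul_le_mul_sq (sq_nonneg ε) h13 (by linarith [hle 1, hle 3]) hmin13
    have h02 := le_mul_of_mul_le_mul_sq (sq_nonneg ε) h02 (by linarith [hle 0, hle 2]) hmin02
    rw [Fin.sum_univ_four] at hasum
    nlinarith
  have hS := abs_sum_mul_sub_sum_mul_le ha hasum hκ hclose
  have hS'0 : 0 ≤ ∑ j, a j * q' j := sum_nonneg fun j _ ↦ mul_nonneg (ha j) (hq'0 j)
  have hS'1 : ∑ j, a j * q' j ≤ 1 :=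
    hasum ▸ sum_le_sum fun j _ ↦ mul_le_of_le_one_right (ha j) (hq'1 j)
  rw [Fintype.card_fin, Nat.cast_ofNat, show (4 : ℝ) = 2 ^ 2 by norm_num, sqrt_sq zero_le_two]
    at hS
  simp only [Fin.sum_univ_four] at hS hS'0 hS'1
  exact abs_ATE_sub_lt_s1 hε0 (pOf_nonneg ha hq0 hq1) hS'0 hS'1 (hS.trans (by nlinarith))
    h62 h73 h40 h51

lemma abs_ATE_pOf_sub_lt_of_sample_size {a q q' : Fin 4 → ℝ} {L m ε : ℝ} (ha : ∀ j, 0 ≤ a j)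
    (hasum : ∑ j, a j = 1) (hq0 : ∀ j, 0 ≤ q j) (hq1 : ∀ j, q j ≤ 1) (hq'0 : ∀ j, 0 ≤ q' j)
    (hq'1 : ∀ j, q' j ≤ 1) (hε0 : 0 < ε) (hε1 : ε ≤ 1) (hL : 0 ≤ L) (hm0 : 0 < m)
    (hclose : ∀ j, |q' j - q j| ≤ √(9 * L / (16 * m)) / √(a j))
    (h37 : 0 < pOf a q 2 + pOf a q 6) (h48 : 0 < pOf a q 3 + pOf a q 7)
    (h15 : 0 < pOf a q 0 + pOf a q 4) (h26 : 0 < pOf a q 1 + pOf a q 5)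
    (hm : m ≥ 18 * L / ε ^ 2 *
      max ((a 1 + a 3) / min ((pOf a q 2 + pOf a q 6) ^ 2) ((pOf a q 3 + pOf a q 7) ^ 2))
        ((a 0 + a 2) / min ((pOf a q 0 + pOf a q 4) ^ 2) ((pOf a q 1 + pOf a q 5) ^ 2))) :
    |ATE (pOf a q') - ATE (pOf a q)| < ε := by
  set κ := √(9 * L / (16 * m))
  have hκ : κ ^ 2 = 9 * L / (16 * m) := sq_sqrt (by positivity)
  have hcoef : 0 ≤ 18 * L / ε ^ 2 := by positivity
  have hsize {X M : ℝ} (hM : 0 < M) (hXM : X / M ≤ max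
      ((a 1 + a 3) / min ((pOf a q 2 + pOf a q 6) ^ 2) ((pOf a q 3 + pOf a q 7) ^ 2))
      ((a 0 + a 2) / min ((pOf a q 0 + pOf a q 4) ^ 2) ((pOf a q 1 + pOf a q 5) ^ 2))) :
      32 * κ ^ 2 * X ≤ ε ^ 2 * M := by
    have h := (mul_le_mul_of_nonneg_left hXM hcoef).trans hm
    rw [div_mul_div_comm, div_le_iff₀ (by positivity)] at h
    rw [hκ, show 32 * (9 * L / (16 * m)) * X = 18 * L * X / m by ring, div_le_iff₀ hm0]
    linarith
  refine abs_ATE_pOf_sub_lt ha hasum hq0 hq1 hq'0 hq'1 hε0 hε1 (sqrt_nonneg _) (fun j ↦ ?_)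
    h37 h48 h15 h26 (hsize (by positivity) (le_max_left _ _))
    (hsize (by positivity) (le_max_right _ _))
  calc a j * |q' j - q j| ≤ a j * (κ / √(a j)) := mul_le_mul_of_nonneg_left (hclose j) (ha j)
    _ = κ * √(a j) := by rw [mul_div_left_comm, div_sqrt]

lemma eight_mul_exp_neg_mul_log_lt {δ : ℝ} (hδ0 : 0 < δ) (hδ1 : δ < 1) :
    8 * exp (-(9 / 8) * log (8 / δ)) < δ := by
  have hL : 0 < log (8 / δ) := log_pos (by rw [lt_div_iff₀ hδ0]; linarith)
  calc 8 * exp (-(9 / 8) * log (8 / δ)) < 8 * exp (-log (8 / δ)) := by gcongr; linarith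
    _ = δ := by rw [exp_neg, exp_log (by positivity)]; field_simp

/-- Sample complexity for estimating the ATE with infinite observational data,
sampling the experimental data according to the distribution,
i.e. `(x_1,x_2,x_3,x_4) = (a_1,a_2,a_3,a_4)` (Theorem 2, first bullet). -/
theorem ate_sample_complexity_sampling_from_distribution
    {Ω : Type*} [MeasurableSpace Ω] (μ : Measure Ω) [IsProbabilityMeasure μ]
    (a q : Fin 4 → ℝ) (ha : ∀ j, 0 ≤ a j) (hasum : ∑ j, a j = 1)
    (hq0 : ∀ j, 0 ≤ q j) (hq1 : ∀ j, q j ≤ 1)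
    (m : ℕ) (n : Fin 4 → ℕ) (hn : ∀ j, 0 < n j)
    -- allocation according to the distribution: `n j = x j * m` with `x j = a j`
    (halloc : ∀ j, (n j : ℝ) = a j * m)
    (W : (j : Fin 4) → Fin (n j) → Ω → Bool)
    (hWmeas : ∀ j i, Measurable (W j i))
    (hindep : iIndepFun
      (fun k : Σ j : Fin 4, Fin (n j) => W k.1 k.2) μ)
    (hdist : ∀ j i, μ {ω | W j i ω = true} = ENNReal.ofReal (q j))
    (ε δ : ℝ) (hε0 : 0 < ε) (hε1 : ε ≤ 1) (hδ0 : 0 < δ) (hδ1 : δ < 1)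
    (h37 : 0 < pOf a q 2 + pOf a q 6) (h48 : 0 < pOf a q 3 + pOf a q 7)
    (h15 : 0 < pOf a q 0 + pOf a q 4) (h26 : 0 < pOf a q 1 + pOf a q 5)
    (hm : (m : ℝ) ≥ 18 * Real.log (8 / δ) / ε ^ 2 *
      max ((a 1 + a 3) /
            min ((pOf a q 2 + pOf a q 6) ^ 2) ((pOf a q 3 + pOf a q 7) ^ 2))
          ((a 0 + a 2) /
            min ((pOf a q 0 + pOf a q 4) ^ 2) ((pOf a q 1 + pOf a q 5) ^ 2))) :
    μ {ω | ε ≤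
        |ATE (pOf a (fun j =>
            ((Finset.univ.filter fun i => W j i ω = true).card : ℝ) / n j)) -
          ATE (pOf a q)|}
      < ENNReal.ofReal δ := by
  set L := log (8 / δ)
  have hL : 0 < L := log_pos (by rw [lt_div_iff₀ hδ0]; linarith)
  have hstratum (j) : (0 : ℝ) < a j * m := halloc j ▸ Nat.cast_pos.2 (hn j)
  have hm0 : (0 : ℝ) < m := pos_of_mul_pos_right (hstratum 0) (ha 0)
  set t : Fin 4 → ℝ := fun j ↦ √(9 * L / (16 * m)) / √(a j)
  have hbad : {ω | ε ≤ |ATE (pOf a (fun j =>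
        ((Finset.univ.filter fun i => W j i ω = true).card : ℝ) / n j)) - ATE (pOf a q)|}
      ⊆ ⋃ j, {ω | t j ≤ |(#{i | W j i ω = true} : ℝ) / n j - q j|} := by
    intro ω hω
    by_contra hgood
    simp only [Set.mem_iUnion, Set.mem_ofPred_eq, not_exists, not_le] at hgood
    exact (abs_ATE_pOf_sub_lt_of_sample_size ha hasum hq0 hq1
      (fun j ↦ (card_filter_div_mem_Icc _).1) (fun j ↦ (card_filter_div_mem_Icc _).2) hε0 hε1
      hL.le hm0 (fun j ↦ (hgood j).le) h37 h48 h15 h26 hm).not_ge hω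
  have htail (j) : μ {ω | t j ≤ |(#{i | W j i ω = true} : ℝ) / n j - q j|}
      ≤ ENNReal.ofReal (2 * exp (-(9 / 8) * L)) := by
    have hindep_j : iIndepFun (W j) μ := hindep.precomp (g := Sigma.mk j) sigma_mk_injective
    convert measure_abs_card_div_sub_ge_le (hn j) (hWmeas j) hindep_j (hq0 j) (hdist j)
      (div_nonneg (sqrt_nonneg _) (sqrt_nonneg _)) using 4
    rw [div_pow, sq_sqrt (by positivity), sq_sqrt (ha j), halloc j]
    field_simp [(pos_of_mul_pos_left (hstratum j) hm0.le).ne']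
    norm_num
  calc _ ≤ μ (⋃ j, {ω | t j ≤ |(#{i | W j i ω = true} : ℝ) / n j - q j|}) := measure_mono hbad
    _ ≤ ENNReal.ofReal (Fintype.card (Fin 4) * (2 * exp (-(9 / 8) * L))) :=
        measure_iUnion_le_ofReal_card_mul htail
    _ < ENNReal.ofReal δ := by
        rw [ENNReal.ofReal_lt_ofReal_iff hδ0, Fintype.card_fin]
        linarith [eight_mul_exp_neg_mul_log_lt hδ0 hδ1]
end

section
/- For every real M > 0 there exist A > 0, B > 0 and a_1, a_2, a_3, a_4 ≥ 0 with a_1+a_2+a_3+a_4 = 1 such that M_ratio(a) ≤ M_distr(a) and M_distr(a) ≥ M · M_ratio(a); that is, the supremum over a of M_distr(a)/M_ratio(a) on the region where M_distr ≥ M_ratio is unbounded, with M_distr(a)/M_ratio(a) ≥ 1/(2(a_2+a_4)) → ∞ as a_2+a_4 → 0. -/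
/-!
If the `(a₂ + a₄)`-term dominates both maxima, then
`M_ratio = 2(a₂ + a₄)²/A = 2(a₂ + a₄) · (a₂ + a₄)/A ≤ 2(a₂ + a₄) · M_distr`,
so `M_distr / M_ratio ≥ 1 / (2(a₂ + a₄))`. Taking `a₂ = x` small, `a₁ = 1 - x`, `A = x²`
and `B = 1` makes the `(a₂ + a₄)`-term dominate, and the ratio exceeds any given `M`.
-/

/-- `M_distr`, written in terms of `x = a₂ + a₄` and `y = a₁ + a₃`. -/
noncomputable def distrFactor (A B x y : ℝ) : ℝ := max (x / A) (y / B)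

/-- `M_ratio`, with the same encoding. -/
noncomputable def ratioFactor (A B x y : ℝ) : ℝ := max (2 * x ^ 2 / A) (2 * y ^ 2 / B)

theorem ratioFactor_le_mul_distrFactor {A B x y : ℝ} (hx : 0 ≤ x)
    (hdom : y ^ 2 / B ≤ x ^ 2 / A) :
    ratioFactor A B x y ≤ 2 * x * distrFactor A B x y := by
  have hmax : 2 * y ^ 2 / B ≤ 2 * x ^ 2 / A := by
    rw [mul_div_assoc, mul_div_assoc]
    linarith
  calc ratioFactor A B x y = 2 * x * (x / A) := by
        rw [ratioFactor, max_eq_left hmax]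
        ring
    _ ≤ 2 * x * distrFactor A B x y := by
        gcongr
        exact le_max_left _ _

/-- Corollary 1, second part: on the region where
`M_distr = max((a₂+a₄)/A, (a₁+a₃)/B)` dominates
`M_ratio = max(2(a₂+a₄)²/A, 2(a₁+a₃)²/B)`, the ratio `M_distr / M_ratio`
is unbounded: for every `M > 0` there are admissible parameters with
`M_ratio ≤ M_distr` and `M_distr ≥ M · M_ratio`. -/
theorem distr_over_ratio_unbounded :
    ∀ M : ℝ, 0 < M → ∃ A B a1 a2 a3 a4 : ℝ,
      0 < A ∧ 0 < B ∧ 0 ≤ a1 ∧ 0 ≤ a2 ∧ 0 ≤ a3 ∧ 0 ≤ a4 ∧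
      a1 + a2 + a3 + a4 = 1 ∧
      max (2 * (a2 + a4) ^ 2 / A) (2 * (a1 + a3) ^ 2 / B) ≤
        max ((a2 + a4) / A) ((a1 + a3) / B) ∧
      max ((a2 + a4) / A) ((a1 + a3) / B) ≥
        M * max (2 * (a2 + a4) ^ 2 / A) (2 * (a1 + a3) ^ 2 / B) := by
  intro M hM
  obtain ⟨x, hx0, hx1, hxM⟩ : ∃ x : ℝ, 0 < x ∧ 2 * x ≤ 1 ∧ M * (2 * x) ≤ 1 := by
    refine ⟨1 / (2 * (M + 1)), by positivity, ?_, ?_⟩ <;>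
      field_simp <;> linarith
  have hdom : ratioFactor (x ^ 2) 1 x (1 - x) ≤ 2 * x * distrFactor (x ^ 2) 1 x (1 - x) :=
    ratioFactor_le_mul_distrFactor hx0.le (by
      rw [div_one, div_self (by positivity)]
      nlinarith)
  have hdistr : 0 ≤ distrFactor (x ^ 2) 1 x (1 - x) :=
    le_max_of_le_right (by linarith)
  refine ⟨x ^ 2, 1, 1 - x, x, 0, 0, by positivity, one_pos, by linarith, hx0.le, le_rfl, le_rfl,
    by ring, ?_, ?_⟩ <;> simp only [add_zero]
  · calc ratioFactor (x ^ 2) 1 x (1 - x) ≤ 2 * x * distrFactor (x ^ 2) 1 x (1 - x) := hdom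
      _ ≤ distrFactor (x ^ 2) 1 x (1 - x) := mul_le_of_le_one_left hdistr hx1
  · calc M * ratioFactor (x ^ 2) 1 x (1 - x)
        ≤ M * (2 * x) * distrFactor (x ^ 2) 1 x (1 - x) := by
          rw [mul_assoc]; exact mul_le_mul_of_nonneg_left hdom hM.le
      _ ≤ distrFactor (x ^ 2) 1 x (1 - x) := mul_le_of_le_one_left hdistr hxM
end

section
/- Deterministic sufficient conditions for accurate ATE estimation: let p_1,...,p_8 ≥ 0 with Σ p_i = 1 and p̂_1,...,p̂_8 ≥ 0 with Σ p̂_i = 1, let 0 < ε ≤ 1, and suppose p_3+p_7 > 0, p_4+p_8 > 0, p_1+p_5 > 0, p_2+p_6 > 0 and likewise p̂_3+p̂_7 > 0, p̂_4+p̂_8 > 0, p̂_1+p̂_5 > 0, p̂_2+p̂_6 > 0. If the following eight inequalities hold: |p_7 − p̂_7| ≤ (p_3+p_7)ε/6, |p_3+p_7 − p̂_3 − p̂_7| ≤ (p_3+p_7)ε/6, |p_8 − p̂_8| ≤ (p_4+p_8)ε/6, |p_4+p_8 − p̂_4 − p̂_8| ≤ (p_4+p_8)ε/6, |p_5 − p̂_5|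 ≤ (p_1+p_5)ε/6, |p_1+p_5 − p̂_1 − p̂_5| ≤ (p_1+p_5)ε/6, |p_6 − p̂_6| ≤ (p_2+p_6)ε/6, and |p_2+p_6 − p̂_2 − p̂_6| ≤ (p_2+p_6)ε/6, then |ATE(p̂_1,...,p̂_8) − ATE(p_1,...,p_8)| ≤ ε. -/
/-!
Conditioning on `Z`, the ATE is `P(Z=0) (r₁ - r₀) + P(Z=1) (r₁' - r₀')`, where the `r`'s are the
conditional probabilities `P(Y=1 | T, Z)`, each a ratio `a / d`. If numerator and denominator are
both perturbed by at most `δ d`, the ratio moves by at most `δ (1 + a / d) / (1 - δ)`, and each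
stratum weight has relative error at most `δ`. Because `r₁ + r₀ + |r₁ - r₀| = 2 max r₁ r₀ ≤ 2`,
these combine to an error of at most `6 δ` times the weight of the stratum as long as `δ ≤ 1/5`;
the weights sum to `1`, so `δ = ε / 6` gives the bound `ε`.
-/

open Set

lemma abs_add_sub_add_le_mul {x y xh yh δ : ℝ} (hx : |x - xh| ≤ x * δ) (hy : |y - yh| ≤ y * δ) :
    |x + y - (xh + yh)| ≤ (x + y) * δ := by
  rw [add_sub_add_comm, add_mul]
  exact (abs_add_le _ _).trans (add_le_add hx hy)

lemma abs_div_sub_div_mul_le {a ah d dh δ : ℝ} (ha : 0 ≤ a) (hd : 0 < d) (hδ : δ < 1)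
    (hah : |a - ah| ≤ d * δ) (hdh : |d - dh| ≤ d * δ) :
    |ah / dh - a / d| * (1 - δ) ≤ δ * (1 + a / d) := by
  have hdh_ge : d * (1 - δ) ≤ dh := by linarith [(abs_le.mp hdh).2]
  have hdh0 : 0 < dh := (mul_pos hd (sub_pos.2 hδ)).trans_le hdh_ge
  have hnum : |ah * d - dh * a| ≤ (d + a) * (d * δ) := calc
    |ah * d - dh * a| = |(ah - a) * d + a * (d - dh)| := by ring_nf
    _ ≤ |a - ah| * d + a * |d - dh| := by
      grw [abs_add_le, abs_mul, abs_mul, abs_of_pos hd, abs_of_nonneg ha, abs_sub_comm ah]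
    _ ≤ d * δ * d + a * (d * δ) := by gcongr
    _ = (d + a) * (d * δ) := by ring
  rw [div_sub_div _ _ hdh0.ne' hd.ne', abs_div, abs_of_pos (mul_pos hdh0 hd),
    div_mul_eq_mul_div, div_le_iff₀ (mul_pos hdh0 hd)]
  calc |ah * d - dh * a| * (1 - δ) ≤ (d + a) * (d * δ) * (1 - δ) := by gcongr
    _ = δ * (d + a) * (d * (1 - δ)) := by ring
    _ ≤ δ * (d + a) * dh := by
        gcongr
        nlinarith [abs_nonneg (d - dh)]
    _ = δ * (1 + a / d) * (dh * d) := by field_simp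

lemma abs_mul_sub_sub_mul_sub_le {q qh r rh s sh δ : ℝ} (hδ0 : 0 ≤ δ) (hδ : δ ≤ 1 / 5)
    (hq0 : 0 ≤ q) (hq : |q - qh| ≤ q * δ) (hr : r ∈ Icc (0 : ℝ) 1) (hs : s ∈ Icc (0 : ℝ) 1)
    (hrh : |rh - r| * (1 - δ) ≤ δ * (1 + r)) (hsh : |sh - s| * (1 - δ) ≤ δ * (1 + s)) :
    |qh * (rh - sh) - q * (r - s)| ≤ 6 * δ * q := by
  obtain ⟨hqh0, hqh⟩ : 0 ≤ qh ∧ qh ≤ q * (1 + δ) := by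
    constructor <;> nlinarith [abs_le.mp hq]
  have hsplit : |qh * (rh - sh) - q * (r - s)| ≤ qh * (|rh - r| + |sh - s|) + q * δ * |r - s| :=
    calc |qh * (rh - sh) - q * (r - s)| = |qh * ((rh - r) - (sh - s)) + (qh - q) * (r - s)| := by
          ring_nf
      _ ≤ qh * (|rh - r| + |sh - s|) + q * δ * |r - s| := by
          grw [abs_add_le, abs_mul, abs_mul, abs_of_nonneg hqh0, abs_sub_comm qh, hq, abs_sub]
  have hmax : (1 + δ) * (2 + r + s) + (1 - δ) * |r - s| ≤ 4 * (1 + δ) := by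
    obtain ⟨hr0, hr1⟩ := hr
    obtain ⟨hs0, hs1⟩ := hs
    rcases abs_cases (r - s) with ⟨h, _⟩ | ⟨h, _⟩ <;> rw [h] <;> nlinarith
  have hδ1 : 0 < 1 - δ := by linarith
  refine hsplit.trans (le_of_mul_le_mul_right ?_ hδ1)
  calc (qh * (|rh - r| + |sh - s|) + q * δ * |r - s|) * (1 - δ)
        = qh * (|rh - r| * (1 - δ) + |sh - s| * (1 - δ)) + q * δ * ((1 - δ) * |r - s|) := by ring
    _ ≤ q * (1 + δ) * (δ * (1 + r) + δ * (1 + s)) + q * δ * ((1 - δ) * |r - s|) := by gcongr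
    _ = q * δ * ((1 + δ) * (2 + r + s) + (1 - δ) * |r - s|) := by ring
    _ ≤ q * δ * (4 * (1 + δ)) := by gcongr
    _ ≤ 6 * δ * q * (1 - δ) := by
        nlinarith [mul_nonneg (mul_nonneg hq0 hδ0) (by linarith : 0 ≤ 1 / 5 - δ)]

lemma abs_mul_div_sub_div_sub_le {q qh a ah d dh b bh e eh δ : ℝ} (hδ0 : 0 ≤ δ) (hδ : δ ≤ 1 / 5)
    (hq0 : 0 ≤ q) (hq : |q - qh| ≤ q * δ)
    (ha : 0 ≤ a) (had : a ≤ d) (hd : 0 < d) (hah : |a - ah| ≤ d * δ) (hdh : |d - dh| ≤ d * δ)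
    (hb : 0 ≤ b) (hbe : b ≤ e) (he : 0 < e) (hbh : |b - bh| ≤ e * δ) (heh : |e - eh| ≤ e * δ) :
    |qh * (ah / dh - bh / eh) - q * (a / d - b / e)| ≤ 6 * δ * q :=
  have hδ1 : δ < 1 := by linarith
  abs_mul_sub_sub_mul_sub_le hδ0 hδ hq0 hq
    ⟨div_nonneg ha hd.le, div_le_one_of_le₀ had hd.le⟩
    ⟨div_nonneg hb he.le, div_le_one_of_le₀ hbe he.le⟩
    (abs_div_sub_div_mul_le ha hd hδ1 hah hdh) (abs_div_sub_div_mul_le hb he hδ1 hbh heh)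

theorem ATE_eq_of_sum_eq_one {p : Fin 8 → ℝ} (hp : ∑ j, p j = 1) :
    ATE p = ((p 2 + p 6) + (p 0 + p 4)) * (p 6 / (p 2 + p 6) - p 4 / (p 0 + p 4))
      + ((p 3 + p 7) + (p 1 + p 5)) * (p 7 / (p 3 + p 7) - p 5 / (p 1 + p 5)) := by
  rw [Fin.sum_univ_eight] at hp
  have hz1 : 1 - p 0 - p 2 - p 4 - p 6 = (p 3 + p 7) + (p 1 + p 5) := by linarith
  rw [ATE, hz1]
  ring

theorem ate_est_of_componentwise_bounds_general
    (p phat : Fin 8 → ℝ)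
    (hp : ∀ j, 0 ≤ p j) (hpsum : ∑ j, p j = 1)
    (hphatsum : ∑ j, phat j = 1)
    (ε : ℝ) (hε0 : 0 < ε) (hε1 : ε ≤ 1)
    (h37 : 0 < p 2 + p 6) (h48 : 0 < p 3 + p 7)
    (h15 : 0 < p 0 + p 4) (h26 : 0 < p 1 + p 5)
    (e1 : |p 6 - phat 6| ≤ (p 2 + p 6) * ε / 6)
    (e2 : |p 2 + p 6 - phat 2 - phat 6| ≤ (p 2 + p 6) * ε / 6)
    (e3 : |p 7 - phat 7| ≤ (p 3 + p 7) * ε / 6)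
    (e4 : |p 3 + p 7 - phat 3 - phat 7| ≤ (p 3 + p 7) * ε / 6)
    (e5 : |p 4 - phat 4| ≤ (p 0 + p 4) * ε / 6)
    (e6 : |p 0 + p 4 - phat 0 - phat 4| ≤ (p 0 + p 4) * ε / 6)
    (e7 : |p 5 - phat 5| ≤ (p 1 + p 5) * ε / 6)
    (e8 : |p 1 + p 5 - phat 1 - phat 5| ≤ (p 1 + p 5) * ε / 6) :
    |ATE phat - ATE p| ≤ ε := by
  simp only [sub_sub, mul_div_assoc] at e1 e2 e3 e4 e5 e6 e7 e8
  have hδ0 : 0 ≤ ε / 6 := by positivity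
  have hδ : ε / 6 ≤ 1 / 5 := by linarith
  have hz0 := abs_mul_div_sub_div_sub_le hδ0 hδ (by positivity) (abs_add_sub_add_le_mul e2 e6)
    (hp 6) (by linarith [hp 2]) h37 e1 e2 (hp 4) (by linarith [hp 0]) h15 e5 e6
  have hz1 := abs_mul_div_sub_div_sub_le hδ0 hδ (by positivity) (abs_add_sub_add_le_mul e4 e8)
    (hp 7) (by linarith [hp 3]) h48 e3 e4 (hp 5) (by linarith [hp 1]) h26 e7 e8
  rw [ATE_eq_of_sum_eq_one hphatsum, ATE_eq_of_sum_eq_one hpsum, add_sub_add_comm]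
  rw [Fin.sum_univ_eight] at hpsum
  calc _ ≤ _ := abs_add_le _ _
    _ ≤ 6 * (ε / 6) * ((p 2 + p 6) + (p 0 + p 4)) + 6 * (ε / 6) * ((p 3 + p 7) + (p 1 + p 5)) :=
        add_le_add hz0 hz1
    _ = ε := by linear_combination ε * hpsum

/-- Deterministic sufficient conditions for accurate ATE estimation: if the
eight componentwise deviation bounds of the paper hold at scale `ε/6`, then
the plug-in ATE estimate is within `ε` of the truth. -/
theorem ate_est_of_componentwise_bounds
    (p phat : Fin 8 → ℝ)
    (hp : ∀ j, 0 ≤ p j) (hpsum : ∑ j, p j = 1)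
    (hphat : ∀ j, 0 ≤ phat j) (hphatsum : ∑ j, phat j = 1)
    (ε : ℝ) (hε0 : 0 < ε) (hε1 : ε ≤ 1)
    (h37 : 0 < p 2 + p 6) (h48 : 0 < p 3 + p 7)
    (h15 : 0 < p 0 + p 4) (h26 : 0 < p 1 + p 5)
    (h37' : 0 < phat 2 + phat 6) (h48' : 0 < phat 3 + phat 7)
    (h15' : 0 < phat 0 + phat 4) (h26' : 0 < phat 1 + phat 5)
    (e1 : |p 6 - phat 6| ≤ (p 2 + p 6) * ε / 6)
    (e2 : |p 2 + p 6 - phat 2 - phat 6| ≤ (p 2 + p 6) * ε / 6)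
    (e3 : |p 7 - phat 7| ≤ (p 3 + p 7) * ε / 6)
    (e4 : |p 3 + p 7 - phat 3 - phat 7| ≤ (p 3 + p 7) * ε / 6)
    (e5 : |p 4 - phat 4| ≤ (p 0 + p 4) * ε / 6)
    (e6 : |p 0 + p 4 - phat 0 - phat 4| ≤ (p 0 + p 4) * ε / 6)
    (e7 : |p 5 - phat 5| ≤ (p 1 + p 5) * ε / 6)
    (e8 : |p 1 + p 5 - phat 1 - phat 5| ≤ (p 1 + p 5) * ε / 6) :
    |ATE phat - ATE p| ≤ ε :=
  ate_est_of_componentwise_bounds_general p phat hp hpsum hphatsum ε hε0 hε1 h37 h48 h15 h26 e1 e2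
    e3 e4 e5 e6 e7 e8
end
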